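/- arXiv:1712.09377 — 2 statements merged into one kernel-verified Lean document; each statement's English description precedes it below -/
import Mathlib

section
/- Let L_d : Q × Q → ℝ be a regular discrete Lagrangian (so the discrete Euler-Lagrange equations D₁L_d(q_k,q_{k+1}) + D₂L_d(q_{k-1},q_k) = 0 determine a unique q_{k+1} from (q_{k-1},q_k), giving the discrete flow F_{L_d}) and φ_d : Q → Q a diffeomorphism with L_d ∘ (φ_d × φ_d) = ±L_d. Then F_{L_d} ∘ (φ_d × φ_d) = (φ_d × φ_d) ∘ F_{L_d}, and consequently the set M_{φ_d} = {(q,q') : φ_d(q)=q, φ_d(q')=q'} is invariant under F_{L_d}. -/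
/-- The discrete Euler–Lagrange equations:
`D₁L_d(q₁,q₂) + D₂L_d(q₀,q₁) = 0`. -/
noncomputable def DEL (n : ℕ) (Ld : (Fin n → ℝ) × (Fin n → ℝ) → ℝ)
    (q0 q1 q2 : Fin n → ℝ) : Prop :=
  fderiv ℝ (fun x => Ld (x, q2)) q1 + fderiv ℝ (fun y => Ld (q0, y)) q1 = 0

/-!
If `L_d ∘ (φ × φ) = ε L_d`, then also `L_d = ε L_d ∘ (ψ × ψ)` for the inverse `ψ` of `φ`.
Writing each partial map of `L_d` through `ψ`, the chain rule expresses the DEL covector at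
`(φ q₀, φ q₁, φ q₂)` as `ε` times the DEL covector at `(q₀, q₁, q₂)` composed with `Dψ`; so `φ`
maps DEL solutions to DEL solutions, and uniqueness of the DEL solution makes the discrete flow
commute with `φ × φ`; the invariance of `M_φ` is read off from this equivariance.
-/

theorem fderiv_eq_const_smul_comp {E F : Type*} [NormedAddCommGroup E] [NormedSpace ℝ E]
    [NormedAddCommGroup F] [NormedSpace ℝ F] {f : E → ℝ} {h : F → ℝ} {g : E → F} {c : ℝ}
    {p : E} (hfg : ∀ x, f x = c * h (g x)) (hh : DifferentiableAt ℝ h (g p))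
    (hg : DifferentiableAt ℝ g p) :
    fderiv ℝ f p = c • (fderiv ℝ h (g p)).comp (fderiv ℝ g p) := by
  obtain rfl : f = fun x => c * h (g x) := funext hfg
  exact ((hh.hasFDerivAt.comp p hg.hasFDerivAt).const_mul c).fderiv

section DiscreteEulerLagrange

variable {n : ℕ} {Ld : (Fin n → ℝ) × (Fin n → ℝ) → ℝ}

theorem DEL.of_map {g : (Fin n → ℝ) → (Fin n → ℝ)} {c : ℝ} (hLd : Differentiable ℝ Ld)
    (hg : Differentiable ℝ g) (hL : ∀ x y, Ld (x, y) = c * Ld (g x, g y))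
    {p₀ p₁ p₂ : Fin n → ℝ} (h : DEL n Ld (g p₀) (g p₁) (g p₂)) : DEL n Ld p₀ p₁ p₂ := by
  unfold DEL at h ⊢
  rw [fderiv_eq_const_smul_comp (h := fun x => Ld (x, g p₂)) (hL · p₂) (by fun_prop) (hg p₁),
    fderiv_eq_const_smul_comp (h := fun y => Ld (g p₀, y)) (hL p₀ ·) (by fun_prop) (hg p₁),
    ← smul_add, ← ContinuousLinearMap.add_comp, h, ContinuousLinearMap.zero_comp, smul_zero]

theorem flow_map_eq_map_flow {φ : (Fin n → ℝ) → (Fin n → ℝ)}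
    {F : (Fin n → ℝ) × (Fin n → ℝ) → (Fin n → ℝ) × (Fin n → ℝ)}
    (hF1 : ∀ z, (F z).1 = z.2) (hF2 : ∀ z, DEL n Ld z.1 z.2 (F z).2)
    (huniq : ∀ q₀ q₁ q₂ q₂' : Fin n → ℝ, DEL n Ld q₀ q₁ q₂ → DEL n Ld q₀ q₁ q₂' → q₂ = q₂')
    (hDEL : ∀ q₀ q₁ q₂, DEL n Ld q₀ q₁ q₂ → DEL n Ld (φ q₀) (φ q₁) (φ q₂))
    (z : (Fin n → ℝ) × (Fin n → ℝ)) :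
    F (φ z.1, φ z.2) = (φ (F z).1, φ (F z).2) := by
  refine Prod.ext ?_ ?_
  · rw [hF1, hF1]
  · exact huniq _ _ _ _ (hF2 _) (hDEL _ _ _ (hF2 z))

end DiscreteEulerLagrange

theorem stmt_11_general (n : ℕ) (Ld : (Fin n → ℝ) × (Fin n → ℝ) → ℝ)
    (hLd : Differentiable ℝ Ld)
    (φ ψ : (Fin n → ℝ) → (Fin n → ℝ))
    (hψ : Differentiable ℝ ψ)
    (hlinv : ∀ x, ψ (φ x) = x) (hrinv : ∀ x, φ (ψ x) = x)
    (hsym : (∀ x y, Ld (φ x, φ y) = Ld (x, y)) ∨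
            (∀ x y, Ld (φ x, φ y) = -Ld (x, y)))
    (F : (Fin n → ℝ) × (Fin n → ℝ) → (Fin n → ℝ) × (Fin n → ℝ))
    (hF1 : ∀ z, (F z).1 = z.2)
    (hF2 : ∀ z, DEL n Ld z.1 z.2 (F z).2)
    (huniq : ∀ q0 q1 q2 q2' : Fin n → ℝ,
      DEL n Ld q0 q1 q2 → DEL n Ld q0 q1 q2' → q2 = q2') :
    (∀ z : (Fin n → ℝ) × (Fin n → ℝ),
      F (φ z.1, φ z.2) = (φ (F z).1, φ (F z).2)) ∧
    (∀ z : (Fin n → ℝ) × (Fin n → ℝ), φ z.1 = z.1 → φ z.2 = z.2 →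
      φ (F z).1 = (F z).1 ∧ φ (F z).2 = (F z).2) := by
  obtain ⟨ε, hε⟩ : ∃ ε : ℝ, ∀ x y, Ld (φ x, φ y) = ε * Ld (x, y) := by
    rcases hsym with h | h
    · exact ⟨1, fun x y => by rw [h, one_mul]⟩
    · exact ⟨-1, fun x y => by rw [h, neg_one_mul]⟩
  have hψsym : ∀ x y, Ld (x, y) = ε * Ld (ψ x, ψ y) := fun x y => by
    rw [← hε, hrinv, hrinv]
  have hDEL : ∀ q₀ q₁ q₂, DEL n Ld q₀ q₁ q₂ → DEL n Ld (φ q₀) (φ q₁) (φ q₂) :=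
    fun q₀ q₁ q₂ h => DEL.of_map hLd hψ hψsym (by rwa [hlinv, hlinv, hlinv])
  have hequiv := flow_map_eq_map_flow hF1 hF2 huniq hDEL
  refine ⟨hequiv, fun z hz₁ hz₂ => ?_⟩
  have hfix := hequiv z
  rw [hz₁, hz₂] at hfix
  exact ⟨congrArg Prod.fst hfix.symm, congrArg Prod.snd hfix.symm⟩

/-- For a regular discrete Lagrangian `L_d` (unique solvability of the DEL equations,
with discrete flow `F(q₀,q₁) = (q₁,q₂)`) and a diffeomorphism `φ_d` with
`L_d ∘ (φ_d × φ_d) = ±L_d`, the flow is `(φ_d × φ_d)`-equivariant, and consequently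
the fixed-point set `M_{φ_d} = {(q,q') : φ_d q = q, φ_d q' = q'}` is invariant
under the discrete flow. -/
theorem stmt_11 (n : ℕ) (Ld : (Fin n → ℝ) × (Fin n → ℝ) → ℝ)
    (hLd : Differentiable ℝ Ld)
    (φ ψ : (Fin n → ℝ) → (Fin n → ℝ))
    (hφ : Differentiable ℝ φ) (hψ : Differentiable ℝ ψ)
    (hlinv : ∀ x, ψ (φ x) = x) (hrinv : ∀ x, φ (ψ x) = x)
    (hsym : (∀ x y, Ld (φ x, φ y) = Ld (x, y)) ∨
            (∀ x y, Ld (φ x, φ y) = -Ld (x, y)))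
    (F : (Fin n → ℝ) × (Fin n → ℝ) → (Fin n → ℝ) × (Fin n → ℝ))
    (hF1 : ∀ z, (F z).1 = z.2)
    (hF2 : ∀ z, DEL n Ld z.1 z.2 (F z).2)
    (huniq : ∀ q0 q1 q2 q2' : Fin n → ℝ,
      DEL n Ld q0 q1 q2 → DEL n Ld q0 q1 q2' → q2 = q2') :
    (∀ z : (Fin n → ℝ) × (Fin n → ℝ),
      F (φ z.1, φ z.2) = (φ (F z).1, φ (F z).2)) ∧
    (∀ z : (Fin n → ℝ) × (Fin n → ℝ), φ z.1 = z.1 → φ z.2 = z.2 →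
      φ (F z).1 = (F z).1 ∧ φ (F z).2 = (F z).2) :=
  stmt_11_general n Ld hLd φ ψ hψ hlinv hrinv hsym F hF1 hF2 huniq
end

section
/- For the midpoint-rule discretization of the extended Lagrangian of the damped linear oscillator, let 𝐋ᵈ(q_k,Q_k,q_{k+1},Q_{k+1}) be defined by the midpoint rule applied to 𝐋 (as in the previous statement); then the discrete Euler-Lagrange equations, restricted to the diagonal q_j = Q_j for all j, yield exactly the scheme M((Q_{k+2} - 2Q_{k+1} + Q_k)/h²) + D((Q_{k+2} - Q_k)/(2h)) + K((Q_{k+2} + 2Q_{k+1} + Q_k)/4) = 0. -/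
open Matrix


open Matrix

variable {n : ℕ}

/-- dot product with a fixed vector on the left, as a continuous linear map. -/
noncomputable def dpCLM (c : Fin n → ℝ) : (Fin n → ℝ) →L[ℝ] ℝ :=
  LinearMap.toContinuousLinearMap
    { toFun := fun v => c ⬝ᵥ v
      map_add' := fun v w => by simp [dotProduct_add]
      map_smul' := fun r v => by simp [dotProduct_smul] }

@[simp] lemma dpCLM_apply (c v : Fin n → ℝ) : dpCLM c v = c ⬝ᵥ v := rfl

/-- the bilinear map (u,w) ↦ u ⬝ᵥ C w as a continuous bilinear map -/
noncomputable def bD (C : Matrix (Fin n) (Fin n) ℝ) :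
    (Fin n → ℝ) →L[ℝ] (Fin n → ℝ) →L[ℝ] ℝ :=
  LinearMap.toContinuousLinearMap
    { toFun := fun u => dpCLM (C.vecMul u)
      map_add' := fun u w => by
        ext v; simp [Matrix.add_vecMul, add_dotProduct]
      map_smul' := fun r u => by
        ext v; simp [Matrix.smul_vecMul, smul_dotProduct] }

@[simp] lemma bD_apply (C : Matrix (Fin n) (Fin n) ℝ) (u v : Fin n → ℝ) :
    bD C u v = u ⬝ᵥ C.mulVec v := by
  simp [bD, dpCLM, ← Matrix.dotProduct_mulVec]

lemma qf_hasFDerivAt (C : Matrix (Fin n) (Fin n) ℝ) (a b : Fin n → ℝ) (s t : ℝ)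
    (p : Fin n → ℝ) :
    HasFDerivAt (fun x : Fin n → ℝ => (a + s • x) ⬝ᵥ C.mulVec (b + t • x))
      (s • dpCLM (C.mulVec (b + t • p)) + t • dpCLM (C.vecMul (a + s • p))) p := by
  have hf : HasFDerivAt (fun x : Fin n → ℝ => a + s • x)
      (s • ContinuousLinearMap.id ℝ (Fin n → ℝ)) p :=
    ((hasFDerivAt_id p).const_smul s).const_add a
  have hg : HasFDerivAt (fun x : Fin n → ℝ => b + t • x)
      (t • ContinuousLinearMap.id ℝ (Fin n → ℝ)) p :=
    ((hasFDerivAt_id p).const_smul t).const_add b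
  have H := (bD C).hasFDerivAt_of_bilinear hf hg
  simp only [bD_apply] at H
  convert H using 1
  iterate 5 rfl
  apply ContinuousLinearMap.ext; intro v
  rw [ContinuousLinearMap.add_apply]
  simp only [ContinuousLinearMap.precompR, ContinuousLinearMap.precompL,
    ContinuousLinearMap.comp_apply, ContinuousLinearMap.flip_apply,
    ContinuousLinearMap.compL_apply, ContinuousLinearMap.add_apply,
    ContinuousLinearMap.smul_apply, ContinuousLinearMap.coe_smul', Pi.smul_apply,
    ContinuousLinearMap.id_apply, bD_apply, dpCLM_apply, smul_eq_mul]
  rw [dotProduct_comm (C *ᵥ (b + t • p)) v, ← Matrix.dotProduct_mulVec]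
  simp only [Matrix.mulVec_smul, dotProduct_smul, smul_dotProduct, smul_eq_mul]
  ring

/-- The midpoint-rule discretization `𝐋ᵈ(q_k, Q_k, q_{k+1}, Q_{k+1})` of the
extended Lagrangian of the damped linear oscillator. -/
noncomputable def extLagMid (n : ℕ) (M K D : Matrix (Fin n) (Fin n) ℝ) (h : ℝ)
    (qk Qk qk1 Qk1 : Fin n → ℝ) : ℝ :=
  (h / 2) * ((h⁻¹ • (Qk1 - Qk)) ⬝ᵥ M.mulVec (h⁻¹ • (Qk1 - Qk)))
    - (h / 2) * (((1 / 2 : ℝ) • (Qk + Qk1)) ⬝ᵥ K.mulVec ((1 / 2 : ℝ) • (Qk + Qk1)))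
    - (h / 2) * ((h⁻¹ • (qk1 - qk)) ⬝ᵥ M.mulVec (h⁻¹ • (qk1 - qk)))
    + (h / 2) * (((1 / 2 : ℝ) • (qk + qk1)) ⬝ᵥ K.mulVec ((1 / 2 : ℝ) • (qk + qk1)))
    - (h / 2) * ((D.mulVec (h⁻¹ • (Qk1 - Qk) + h⁻¹ • (qk1 - qk))) ⬝ᵥ
        ((1 / 2 : ℝ) • (Qk + Qk1) - (1 / 2 : ℝ) • (qk + qk1)))

/-- Restricted to the diagonal `q_j = Q_j`, the `Q`-component of the discrete
Euler–Lagrange equations of the midpoint discretization,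
`D_{Q_{k+1}}𝐋ᵈ(q_k,Q_k,q_{k+1},Q_{k+1}) + D_{Q_{k+1}}𝐋ᵈ(q_{k+1},Q_{k+1},q_{k+2},Q_{k+2})`,
equals `-h` times
`M((Q_{k+2} - 2Q_{k+1} + Q_k)/h²) + D((Q_{k+2} - Q_k)/(2h)) + K((Q_{k+2} + 2Q_{k+1} + Q_k)/4)`;
in particular the DEL equations restricted to the diagonal are exactly this
linear recurrence. -/
theorem stmt_14 (n : ℕ) (M K D : Matrix (Fin n) (Fin n) ℝ)
    (hM : M.IsSymm) (hK : K.IsSymm) (hD : D.IsSymm)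
    (h : ℝ) (hh : 0 < h) (Q0 Q1 Q2 : Fin n → ℝ) :
    (fun i =>
        fderiv ℝ (fun x => extLagMid n M K D h Q0 Q0 Q1 x) Q1 (Pi.single i 1)
      + fderiv ℝ (fun x => extLagMid n M K D h Q1 x Q2 Q2) Q1 (Pi.single i 1))
    = (-h) • (M.mulVec ((h ^ 2)⁻¹ • (Q2 - (2 : ℝ) • Q1 + Q0))
        + D.mulVec ((2 * h)⁻¹ • (Q2 - Q0))
        + K.mulVec ((4 : ℝ)⁻¹ • (Q2 + (2 : ℝ) • Q1 + Q0))) := by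
  have hh0 : h ≠ 0 := ne_of_gt hh
  have hMv : ∀ u : Fin n → ℝ, u ᵥ* M = M *ᵥ u := fun u => by
    rw [← Matrix.mulVec_transpose, hM.eq]
  have hKv : ∀ u : Fin n → ℝ, u ᵥ* K = K *ᵥ u := fun u => by
    rw [← Matrix.mulVec_transpose, hK.eq]
  have hDv : ∀ u : Fin n → ℝ, u ᵥ* D = D *ᵥ u := fun u => by
    rw [← Matrix.mulVec_transpose, hD.eq]
  -- first function: x is in the Qk1 slot, (qk, Qk, qk1) = (Q0, Q0, Q1)
  have e1 : (fun x => extLagMid n M K D h Q0 Q0 Q1 x)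
      = fun x =>
        (h / 2) * (((-h⁻¹) • Q0 + h⁻¹ • x) ⬝ᵥ M.mulVec ((-h⁻¹) • Q0 + h⁻¹ • x))
        - (h / 2) * (((1 / 2 : ℝ) • Q0 + (1 / 2 : ℝ) • x) ⬝ᵥ
            K.mulVec ((1 / 2 : ℝ) • Q0 + (1 / 2 : ℝ) • x))
        - (h / 2) * ((h⁻¹ • (Q1 - Q0)) ⬝ᵥ M.mulVec (h⁻¹ • (Q1 - Q0)))
        + (h / 2) * (((1 / 2 : ℝ) • (Q0 + Q1)) ⬝ᵥ K.mulVec ((1 / 2 : ℝ) • (Q0 + Q1)))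
        - (h / 2) * (((-(1 / 2 : ℝ)) • Q1 + (1 / 2 : ℝ) • x) ⬝ᵥ
            D.mulVec ((h⁻¹ • Q1 - (2 * h⁻¹) • Q0) + h⁻¹ • x)) := by
    funext x
    simp only [extLagMid]
    rw [show h⁻¹ • (x - Q0) = (-h⁻¹) • Q0 + h⁻¹ • x from by module,
        show (1 / 2 : ℝ) • (Q0 + x) = (1 / 2 : ℝ) • Q0 + (1 / 2 : ℝ) • x from by module]
    rw [show ((-h⁻¹) • Q0 + h⁻¹ • x) + h⁻¹ • (Q1 - Q0)
          = (h⁻¹ • Q1 - (2 * h⁻¹) • Q0) + h⁻¹ • x from by module,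
        show ((1 / 2 : ℝ) • Q0 + (1 / 2 : ℝ) • x) - (1 / 2 : ℝ) • (Q0 + Q1)
          = (-(1 / 2 : ℝ)) • Q1 + (1 / 2 : ℝ) • x from by module,
        dotProduct_comm (D.mulVec ((h⁻¹ • Q1 - (2 * h⁻¹) • Q0) + h⁻¹ • x))]
  -- second function: x is in the Qk slot, (qk, qk1, Qk1) = (Q1, Q2, Q2)
  have e2 : (fun x => extLagMid n M K D h Q1 x Q2 Q2)
      = fun x =>
        (h / 2) * ((h⁻¹ • Q2 + (-h⁻¹) • x) ⬝ᵥ M.mulVec (h⁻¹ • Q2 + (-h⁻¹) • x))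
        - (h / 2) * (((1 / 2 : ℝ) • Q2 + (1 / 2 : ℝ) • x) ⬝ᵥ
            K.mulVec ((1 / 2 : ℝ) • Q2 + (1 / 2 : ℝ) • x))
        - (h / 2) * ((h⁻¹ • (Q2 - Q1)) ⬝ᵥ M.mulVec (h⁻¹ • (Q2 - Q1)))
        + (h / 2) * (((1 / 2 : ℝ) • (Q1 + Q2)) ⬝ᵥ K.mulVec ((1 / 2 : ℝ) • (Q1 + Q2)))
        - (h / 2) * (((-(1 / 2 : ℝ)) • Q1 + (1 / 2 : ℝ) • x) ⬝ᵥ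
            D.mulVec (((2 * h⁻¹) • Q2 - h⁻¹ • Q1) + (-h⁻¹) • x)) := by
    funext x
    simp only [extLagMid]
    rw [show h⁻¹ • (Q2 - x) = h⁻¹ • Q2 + (-h⁻¹) • x from by module,
        show (1 / 2 : ℝ) • (x + Q2) = (1 / 2 : ℝ) • Q2 + (1 / 2 : ℝ) • x from by module]
    rw [show (h⁻¹ • Q2 + (-h⁻¹) • x) + h⁻¹ • (Q2 - Q1)
          = ((2 * h⁻¹) • Q2 - h⁻¹ • Q1) + (-h⁻¹) • x from by module,
        show ((1 / 2 : ℝ) • Q2 + (1 / 2 : ℝ) • x) - (1 / 2 : ℝ) • (Q1 + Q2)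
          = (-(1 / 2 : ℝ)) • Q1 + (1 / 2 : ℝ) • x from by module,
        dotProduct_comm (D.mulVec (((2 * h⁻¹) • Q2 - h⁻¹ • Q1) + (-h⁻¹) • x))]
  have H1 :=
    ((((((qf_hasFDerivAt M ((-h⁻¹) • Q0) ((-h⁻¹) • Q0) h⁻¹ h⁻¹ Q1).const_mul (h / 2)).sub
      ((qf_hasFDerivAt K ((1 / 2 : ℝ) • Q0) ((1 / 2 : ℝ) • Q0) (1 / 2) (1 / 2) Q1).const_mul
        (h / 2))).sub_const
      ((h / 2) * ((h⁻¹ • (Q1 - Q0)) ⬝ᵥ M.mulVec (h⁻¹ • (Q1 - Q0))))).add_const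
      ((h / 2) * (((1 / 2 : ℝ) • (Q0 + Q1)) ⬝ᵥ K.mulVec ((1 / 2 : ℝ) • (Q0 + Q1))))).sub
      ((qf_hasFDerivAt D ((-(1 / 2 : ℝ)) • Q1) (h⁻¹ • Q1 - (2 * h⁻¹) • Q0) (1 / 2) h⁻¹
        Q1).const_mul (h / 2)))
  have H2 :=
    ((((((qf_hasFDerivAt M (h⁻¹ • Q2) (h⁻¹ • Q2) (-h⁻¹) (-h⁻¹) Q1).const_mul (h / 2)).sub
      ((qf_hasFDerivAt K ((1 / 2 : ℝ) • Q2) ((1 / 2 : ℝ) • Q2) (1 / 2) (1 / 2) Q1).const_mul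
        (h / 2))).sub_const
      ((h / 2) * ((h⁻¹ • (Q2 - Q1)) ⬝ᵥ M.mulVec (h⁻¹ • (Q2 - Q1))))).add_const
      ((h / 2) * (((1 / 2 : ℝ) • (Q1 + Q2)) ⬝ᵥ K.mulVec ((1 / 2 : ℝ) • (Q1 + Q2))))).sub
      ((qf_hasFDerivAt D ((-(1 / 2 : ℝ)) • Q1) ((2 * h⁻¹) • Q2 - h⁻¹ • Q1) (1 / 2) (-h⁻¹)
        Q1).const_mul (h / 2)))
  funext i
  rw [e1, e2]
  erw [H1.fderiv, H2.fderiv]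
  simp only [ContinuousLinearMap.coe_sub', ContinuousLinearMap.coe_add', Pi.sub_apply,
    Pi.add_apply, ContinuousLinearMap.coe_smul', Pi.smul_apply, ContinuousLinearMap.add_apply,
    ContinuousLinearMap.smul_apply, dpCLM_apply, dotProduct_single, hMv, hKv, hDv,
    Matrix.mulVec_add, Matrix.mulVec_sub, Matrix.mulVec_smul, smul_eq_mul, mul_one]
  simp only [Pi.add_apply, Pi.sub_apply, Pi.smul_apply, Pi.neg_apply, smul_eq_mul, neg_mul]
  field_simp
  ring
end
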